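/- Concavity at the optimum: the function (x₁,…,x_{i-1}) ↦ H(x₁,…,x_{i-1},ℓᵢ,…,ℓₙ) on the positive orthant attains a global maximum (not merely a critical point) at x₁ = ⋯ = x_{i-1} = Sᵢ/e^{Hᵢ}, and the maximum value is strictly greater than H at any other point of the orthant. -/

import Mathlib

/-!
Put `v = (g, ℓ)` with `g = Sᵢ / exp Hᵢ`. This choice of `g` means `∑ ℓ log ℓ = Sᵢ log g`, so
`∑ u log v = (∑ u) log g` for every `u = (y, ℓ)`: the cross entropy of `(x, ℓ)` against `v`
does not depend on `x` and equals `H(v)`. Strict Gibbs' inequality, i.e. strict Jensen for `log`,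
then gives `H(x, ℓ) < H(v)` unless `(x, ℓ)` is proportional to `v`, which forces `x = g`.
-/

open Finset

noncomputable def pentropy {ι : Type*} [Fintype ι] (ℓ : ι → ℝ) : ℝ :=
  -∑ i, (ℓ i / ∑ j, ℓ j) * Real.log (ℓ i / ∑ j, ℓ j)

open Real

section
variable {ι : Type*} [Fintype ι]

theorem pentropy_eq_log_sum_sub {ℓ : ι → ℝ} (hS : ∑ i, ℓ i ≠ 0) :
    pentropy ℓ = log (∑ i, ℓ i) - (∑ i, ℓ i * log (ℓ i)) / ∑ i, ℓ i := by
  have hterm : ∀ i, ℓ i / (∑ j, ℓ j) * log (ℓ i / ∑ j, ℓ j)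
      = ℓ i * log (ℓ i) / (∑ j, ℓ j) - ℓ i / (∑ j, ℓ j) * log (∑ j, ℓ j) := by
    intro i
    rcases eq_or_ne (ℓ i) 0 with h | h
    · simp [h]
    · rw [log_div h hS]; ring
  simp only [pentropy, hterm, sum_sub_distrib, ← sum_div, ← sum_mul, div_self hS]
  ring

/-- Strict Gibbs' inequality: the right side is the cross entropy of `w / ∑ w` against `v / ∑ v`. -/
theorem pentropy_lt_log_sum_sub {w v : ι → ℝ} (hw : ∀ i, 0 < w i) (hv : ∀ i, 0 < v i) {j k : ι}
    (hjk : v j / w j ≠ v k / w k) :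
    pentropy w < log (∑ i, v i) - (∑ i, w i * log (v i)) / ∑ i, w i := by
  set W := ∑ i, w i
  have hW : 0 < W := sum_pos (fun i _ => hw i) ⟨j, mem_univ _⟩
  have jensen : ∑ i, (w i / W) • log (v i / w i) < log (∑ i, (w i / W) • (v i / w i)) :=
    strictConcaveOn_log_Ioi.lt_map_sum (fun i _ => div_pos (hw i) hW)
      (by rw [← sum_div, div_self hW.ne']) (fun i _ => div_pos (hv i) (hw i))
      ⟨j, mem_univ _, k, mem_univ _, hjk⟩
  have hmean : ∑ i, (w i / W) • (v i / w i) = (∑ i, v i) / W := by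
    rw [sum_div]
    refine sum_congr rfl fun i _ => ?_
    rw [smul_eq_mul]
    field_simp [(hw i).ne']
  have hlhs : ∑ i, (w i / W) • log (v i / w i)
      = (∑ i, w i * log (v i)) / W - (∑ i, w i * log (w i)) / W := by
    simp only [smul_eq_mul, ← sub_div, ← sum_sub_distrib, sum_div]
    refine sum_congr rfl fun i _ => ?_
    rw [log_div (hv i).ne' (hw i).ne']
    ring
  rw [hmean, hlhs, log_div (sum_pos (fun i _ => hv i) ⟨j, mem_univ _⟩).ne' hW.ne'] at jensen
  rw [pentropy_eq_log_sum_sub hW.ne']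
  linarith

end

theorem sum_mul_log_sum_elim {α β : Type*} [Fintype α] [Fintype β] {ℓ : β → ℝ} {g : ℝ}
    (hℓ : ∑ j, ℓ j * log (ℓ j) = (∑ j, ℓ j) * log g) (y : α → ℝ) :
    ∑ i, Sum.elim y ℓ i * log (Sum.elim (fun _ => g) ℓ i) = (∑ i, Sum.elim y ℓ i) * log g := by
  simp [Fintype.sum_sum_type, hℓ, sum_mul, add_mul]

theorem sum_mul_log_eq_mul_log_div_exp_pentropy {ι : Type*} [Fintype ι] {ℓ : ι → ℝ}
    (hS : ∑ i, ℓ i ≠ 0) :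
    ∑ i, ℓ i * log (ℓ i) = (∑ i, ℓ i) * log ((∑ i, ℓ i) / exp (pentropy ℓ)) := by
  rw [log_div hS (exp_pos _).ne', log_exp, pentropy_eq_log_sum_sub hS]
  field_simp
  ring

theorem entropy_strict_global_max_general (m k : ℕ) (hk : 0 < k)
    (ℓ : Fin k → ℝ) (hℓ : ∀ j, 0 < ℓ j)
    (x : Fin m → ℝ) (hx : ∀ j, 0 < x j)
    (hne : x ≠ fun _ => (∑ j, ℓ j) / Real.exp (pentropy ℓ)) :
    pentropy (Sum.elim x ℓ) <
      pentropy (Sum.elim (fun _ : Fin m => (∑ j, ℓ j) / Real.exp (pentropy ℓ)) ℓ) := by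
  set g := (∑ j, ℓ j) / exp (pentropy ℓ)
  have hS : 0 < ∑ j, ℓ j := sum_pos (fun j _ => hℓ j) ⟨⟨0, hk⟩, mem_univ _⟩
  have hg : 0 < g := div_pos hS (exp_pos _)
  have hlog := sum_mul_log_eq_mul_log_div_exp_pentropy hS.ne'
  obtain ⟨j, hj⟩ := Function.ne_iff.mp hne
  have hpos : ∀ y : Fin m → ℝ, (∀ i, 0 < y i) → ∀ i, 0 < Sum.elim y ℓ i :=
    fun y hy i => i.rec hy hℓ
  let i₀ : Fin m ⊕ Fin k := .inr ⟨0, hk⟩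
  have hratio : Sum.elim (fun _ => g) ℓ (.inl j) / Sum.elim x ℓ (.inl j)
      ≠ Sum.elim (fun _ => g) ℓ i₀ / Sum.elim x ℓ i₀ := by
    simpa [i₀, div_self (hℓ _).ne', div_eq_one_iff_eq (hx j).ne'] using Ne.symm hj
  calc pentropy (Sum.elim x ℓ)
      < log (∑ i, Sum.elim (fun _ => g) ℓ i)
          - (∑ i, Sum.elim x ℓ i * log (Sum.elim (fun _ => g) ℓ i)) / ∑ i, Sum.elim x ℓ i :=
        pentropy_lt_log_sum_sub (hpos x hx) (hpos _ fun _ => hg) hratio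
    _ = log (∑ i, Sum.elim (fun _ => g) ℓ i) - log g := by
        rw [sum_mul_log_sum_elim hlog, mul_div_cancel_left₀]
        exact (sum_pos (fun i _ => hpos x hx i) ⟨i₀, mem_univ _⟩).ne'
    _ = pentropy (Sum.elim (fun _ => g) ℓ) := by
        have hV := sum_pos (fun i _ => hpos _ (fun _ => hg) i) ⟨i₀, mem_univ _⟩
        rw [pentropy_eq_log_sum_sub hV.ne', sum_mul_log_sum_elim hlog,
          mul_div_cancel_left₀ _ hV.ne']

/-- The constant point `x = g` is the strict global maximum of
`(x₁,…,x_{i-1}) ↦ H(x,ℓ)` on the positive orthant (here `m = i-1 ≥ 1`). -/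
theorem entropy_strict_global_max (m k : ℕ) (hm : 0 < m) (hk : 0 < k)
    (ℓ : Fin k → ℝ) (hℓ : ∀ j, 0 < ℓ j)
    (x : Fin m → ℝ) (hx : ∀ j, 0 < x j)
    (hne : x ≠ fun _ => (∑ j, ℓ j) / Real.exp (pentropy ℓ)) :
    pentropy (Sum.elim x ℓ) <
      pentropy (Sum.elim (fun _ : Fin m => (∑ j, ℓ j) / Real.exp (pentropy ℓ)) ℓ) :=
  entropy_strict_global_max_general m k hk ℓ hℓ x hx hne
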